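/- arXiv:1506.08324 — 4 statements merged into one kernel-verified Lean document; each statement's English description precedes it below -/
import Mathlib

section
/- For any abelian group A, the sequence Γ(A) → A ⊗ A → Λ²(A) → 0 is exact, where the first map is determined by γ(a) ↦ a ⊗ a and the second map is the canonical surjection a ⊗ b ↦ a ∧ b onto the exterior square. Consequently, with Φ(A) = Ker(Γ(A) → A ⊗ A), there is an exact sequence 0 → Φ(A) → Γ(A) → A ⊗ A → Λ²(A) → 0. -/
/-- The subgroup of relations defining the Whitehead group `Γ(A)`: it is generated by
`γ(0)`, by `γ(−a) − γ(a)`, and by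
`γ(a+b+c) − γ(a+b) − γ(a+c) − γ(b+c) + γ(a) + γ(b) + γ(c)`,
where `γ(a)` stands for the basis element `of a` of the free abelian group on `A`. -/
def whiteheadRels (A : Type*) [AddCommGroup A] : AddSubgroup (FreeAbelianGroup A) :=
  AddSubgroup.closure
    ({FreeAbelianGroup.of (0 : A)} ∪
      {x | ∃ a : A, x = FreeAbelianGroup.of (-a) - FreeAbelianGroup.of a} ∪
      {x | ∃ a b c : A,
        x = FreeAbelianGroup.of (a + b + c) - FreeAbelianGroup.of (a + b) -
            FreeAbelianGroup.of (a + c) - FreeAbelianGroup.of (b + c) +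
            FreeAbelianGroup.of a + FreeAbelianGroup.of b + FreeAbelianGroup.of c})

/-- The Whitehead group `Γ(A)` of an abelian group `A`: the quotient of the free abelian
group on the set `A` by the Whitehead relations. -/
def Whitehead (A : Type*) [AddCommGroup A] : Type _ :=
  FreeAbelianGroup A ⧸ whiteheadRels A

instance (A : Type*) [AddCommGroup A] : AddCommGroup (Whitehead A) :=
  QuotientAddGroup.Quotient.addCommGroup (whiteheadRels A)

/-- The generator `γ(a)` of the Whitehead group `Γ(A)`. -/
def gamma {A : Type*} [AddCommGroup A] (a : A) : Whitehead A :=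
  QuotientAddGroup.mk (FreeAbelianGroup.of a)

/-! The map `γ(a) ↦ a ⊗ a` is well defined because `a ↦ a ⊗ a` is a quadratic map: it is even,
vanishes at `0`, and its second cross effect `(a, b) ↦ a ⊗ b + b ⊗ a` is biadditive, which is
exactly the cubic Whitehead relation. Since the `γ(a)` generate `Γ(A)`, the image of any map
with `γ(a) ↦ a ⊗ a` is the subgroup generated by the `a ⊗ a`, i.e. the kernel of
`A ⊗ A → Λ²(A)`; the remaining exactness claims are formal. -/

open TensorProduct

namespace Whitehead

variable {A B : Type*} [AddCommGroup A] [AddCommGroup B]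

lemma closure_range_gamma : AddSubgroup.closure (Set.range (gamma (A := A))) = ⊤ := by
  rw [eq_top_iff]
  rintro x -
  obtain ⟨y, rfl⟩ := QuotientAddGroup.mk_surjective x
  induction y using FreeAbelianGroup.induction_on with
  | zero => exact zero_mem _
  | of a => exact AddSubgroup.subset_closure ⟨a, rfl⟩
  | neg y hy => exact neg_mem hy
  | add y z hy hz => exact add_mem hy hz

lemma range_eq_closure (w : Whitehead A →+ B) :
    w.range = AddSubgroup.closure (Set.range fun a => w (gamma a)) := by
  rw [AddMonoidHom.range_eq_map, ← closure_range_gamma, AddMonoidHom.map_closure,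
    ← Set.range_comp]
  rfl

def lift (q : A → B) (h_zero : q 0 = 0) (h_neg : ∀ a, q (-a) = q a)
    (h_cubic : ∀ a b c, q (a + b + c) - q (a + b) - q (a + c) - q (b + c) + q a + q b + q c = 0) :
    Whitehead A →+ B :=
  QuotientAddGroup.lift (whiteheadRels A) (FreeAbelianGroup.lift q) <| by
    rw [whiteheadRels, AddSubgroup.closure_le]
    rintro x ((rfl | ⟨a, rfl⟩) | ⟨a, b, c, rfl⟩) <;> simp [h_zero, h_neg, h_cubic]

@[simp]
lemma lift_gamma (q : A → B) (h_zero : q 0 = 0) (h_neg : ∀ a, q (-a) = q a)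
    (h_cubic : ∀ a b c, q (a + b + c) - q (a + b) - q (a + c) - q (b + c) + q a + q b + q c = 0)
    (a : A) : lift q h_zero h_neg h_cubic (gamma a) = q a :=
  FreeAbelianGroup.lift_apply_of q a

end Whitehead

lemma TensorProduct.tmul_self_cubic {R M : Type*} [CommRing R] [AddCommGroup M] [Module R M]
    (a b c : M) :
    (a + b + c) ⊗ₜ[R] (a + b + c) - (a + b) ⊗ₜ (a + b) - (a + c) ⊗ₜ (a + c) - (b + c) ⊗ₜ (b + c)
      + a ⊗ₜ a + b ⊗ₜ b + c ⊗ₜ c = 0 := by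
  simp only [add_tmul, tmul_add]
  abel

noncomputable def Whitehead.tmulSelf (A : Type*) [AddCommGroup A] : Whitehead A →+ A ⊗[ℤ] A :=
  Whitehead.lift (fun a => a ⊗ₜ a) (zero_tmul A 0) (fun a => by simp [neg_tmul, tmul_neg])
    tmul_self_cubic

open TensorProduct in
/-- For an abelian group `A`, the sequence
`Γ(A) → A ⊗ A → Λ²(A) → 0` is exact, where the first map `w` is determined by
`γ(a) ↦ a ⊗ a` and `Λ²(A)` is the exterior square, i.e. the quotient of `A ⊗ A` by the
subgroup generated by the elements `a ⊗ a`, with the canonical surjection `a ⊗ b ↦ a ∧ b`.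
Consequently, with `Φ(A) = Ker w`, the sequence
`0 → Φ(A) → Γ(A) → A ⊗ A → Λ²(A) → 0` is exact: the inclusion `Φ(A) → Γ(A)` is
injective, the sequence is exact at `Γ(A)` and at `A ⊗ A`, and the canonical map onto
`Λ²(A)` is surjective. -/
theorem stmt8 (A : Type) [AddCommGroup A] :
    (∃ w : Whitehead A →+ A ⊗[ℤ] A, ∀ a : A, w (gamma a) = a ⊗ₜ[ℤ] a) ∧
      ∀ w : Whitehead A →+ A ⊗[ℤ] A, (∀ a : A, w (gamma a) = a ⊗ₜ[ℤ] a) →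
        Function.Injective (w.ker.subtype) ∧
        Function.Exact (w.ker.subtype) w ∧
        Function.Exact w
          (QuotientAddGroup.mk' (AddSubgroup.closure {z : A ⊗[ℤ] A | ∃ a : A, z = a ⊗ₜ[ℤ] a})) ∧
        Function.Surjective
          (QuotientAddGroup.mk' (AddSubgroup.closure {z : A ⊗[ℤ] A | ∃ a : A, z = a ⊗ₜ[ℤ] a})) := by
  refine ⟨⟨Whitehead.tmulSelf A, Whitehead.lift_gamma _ _ _ _⟩, fun w hw =>
    ⟨w.ker.subtype_injective, ?_, ?_, QuotientAddGroup.mk'_surjective _⟩⟩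
  · exact AddMonoidHom.exact_iff.2 w.ker.range_subtype.symm
  · rw [AddMonoidHom.exact_iff, QuotientAddGroup.ker_mk', Whitehead.range_eq_closure]
    simp only [hw, Set.range, eq_comm]
end

section
/- Let G be a group and R₁, …, Rₙ (n ≥ 2) normal subgroups of G. Define ‖R₁,…,Rₙ‖ = ∏ [∩_{i∈I} R_i, ∩_{j∈J} R_j], the product taken over all partitions I ∪ J = {1,…,n} with I ∩ J = ∅, and define ‖𝐫₁,…,𝐫ₙ‖ = Σ ( (∩_{i∈I} 𝐫_i)(∩_{j∈J} 𝐫_j) + (∩_{j∈J} 𝐫_j)(∩_{i∈I} 𝐫_i) ), the sum over the same partitions. Then ‖R₁,…,Rₙ‖ ⊆ D(G, ‖𝐫₁,…,𝐫ₙ‖), i.e. every g ∈ ‖R₁,…,Rₙ‖ satisfies g − 1 ∈ ‖𝐫₁,…,𝐫ₙ‖. -/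
/-!
The elements `g` with `g - 1 ∈ 𝐚` form a subgroup `D(G, 𝐚)`, so it suffices to place the
generators `[a, b]` of each commutator subgroup in it, and these satisfy
`[a, b] - 1 = ((a - 1)(b - 1) - (b - 1)(a - 1)) a⁻¹ b⁻¹` in `ℤ[G]`.
-/

/-- The two-sided ideal `(N-1)ℤ[G]` of the integral group ring `ℤ[G]`
generated by the elements `n - 1` for `n ∈ N`. -/
noncomputable def relIdeal (G : Type*) [Group G] (N : Subgroup G) : TwoSidedIdeal (MonoidAlgebra ℤ G) :=
  TwoSidedIdeal.span {x | ∃ n ∈ N, x = MonoidAlgebra.of ℤ G n - 1}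

/-- The product of two two-sided ideals: the ideal generated by products `a * b`
with `a ∈ I`, `b ∈ J`. -/
def tsMul {A : Type*} [Ring A] (I J : TwoSidedIdeal A) : TwoSidedIdeal A :=
  TwoSidedIdeal.span {x | ∃ a ∈ I, ∃ b ∈ J, x = a * b}

open scoped commutatorElement

lemma mem_relIdeal {G : Type*} [Group G] {N : Subgroup G} {g : G} (hg : g ∈ N) :
    MonoidAlgebra.of ℤ G g - 1 ∈ relIdeal G N :=
  TwoSidedIdeal.subset_span ⟨g, hg, rfl⟩

lemma of_sub_one_mem_iInf_relIdeal {G ι : Type*} [Group G] {R : ι → Subgroup G}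
    {I : Finset ι} {g : G} (hg : g ∈ ⨅ i ∈ I, R i) :
    MonoidAlgebra.of ℤ G g - 1 ∈ ⨅ i ∈ I, relIdeal G (R i) := by
  rw [TwoSidedIdeal.mem_iInf]
  intro i
  by_cases hi : i ∈ I
  · rw [iInf_pos hi]
    exact mem_relIdeal (Subgroup.mem_iInf.mp (Subgroup.mem_iInf.mp hg i) hi)
  · rw [iInf_neg hi]
    trivial

lemma mem_tsMul {A : Type*} [Ring A] {I J : TwoSidedIdeal A} {a b : A}
    (ha : a ∈ I) (hb : b ∈ J) : a * b ∈ tsMul I J :=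
  TwoSidedIdeal.subset_span ⟨a, ha, b, hb, rfl⟩

section DimensionSubgroup

variable {G A : Type*} [Group G] [Ring A] (f : G →* A)

lemma map_commutatorElement_sub_one (a b : G) :
    f ⁅a, b⁆ - 1 = ((f a - 1) * (f b - 1) - (f b - 1) * (f a - 1)) * (f a⁻¹ * f b⁻¹) := by
  have hinv (x : G) : f x * f x⁻¹ = 1 := by rw [← map_mul, mul_inv_cancel, map_one]
  calc f ⁅a, b⁆ - 1 = f a * f b * f a⁻¹ * f b⁻¹ - f b * (f a * f a⁻¹) * f b⁻¹ := by
        rw [hinv, mul_one, hinv, commutatorElement_def, map_mul, map_mul, map_mul]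
    _ = _ := by noncomm_ring

/-- The paper's `D(G, 𝐚)` is `dimensionSubgroup (MonoidAlgebra.of ℤ G) 𝐚`. -/
def dimensionSubgroup (T : TwoSidedIdeal A) : Subgroup G where
  carrier := {g | f g - 1 ∈ T}
  one_mem' := by simp
  mul_mem' {a b} ha hb := by
    have h : f (a * b) - 1 = (f a - 1) * f b + (f b - 1) := by rw [map_mul]; noncomm_ring
    simpa only [Set.mem_ofPred_eq, h] using T.add_mem (T.mul_mem_right _ _ ha) hb
  inv_mem' {a} ha := by
    have h : f a⁻¹ - 1 = -((f a - 1) * f a⁻¹) := by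
      rw [sub_mul, ← map_mul, mul_inv_cancel, map_one, one_mul, neg_sub]
    simpa only [Set.mem_ofPred_eq, h] using T.neg_mem (T.mul_mem_right _ _ ha)

variable {f}

@[simp]
lemma mem_dimensionSubgroup {T : TwoSidedIdeal A} {g : G} :
    g ∈ dimensionSubgroup f T ↔ f g - 1 ∈ T :=
  Iff.rfl

lemma dimensionSubgroup_mono {T T' : TwoSidedIdeal A} (h : T ≤ T') :
    dimensionSubgroup f T ≤ dimensionSubgroup f T' :=
  fun _ hg => h hg

lemma commutator_le_dimensionSubgroup {M N : Subgroup G} {𝔪 𝔫 : TwoSidedIdeal A}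
    (hM : ∀ a ∈ M, f a - 1 ∈ 𝔪) (hN : ∀ b ∈ N, f b - 1 ∈ 𝔫) :
    ⁅M, N⁆ ≤ dimensionSubgroup f (tsMul 𝔪 𝔫 ⊔ tsMul 𝔫 𝔪) := by
  rw [Subgroup.commutator_le]
  intro a ha b hb
  rw [mem_dimensionSubgroup, map_commutatorElement_sub_one, sub_mul]
  refine TwoSidedIdeal.sub_mem _ (le_sup_left (a := tsMul 𝔪 𝔫) ?_)
    (le_sup_right (b := tsMul 𝔫 𝔪) ?_)
  · exact TwoSidedIdeal.mul_mem_right _ _ _ (mem_tsMul (hM a ha) (hN b hb))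
  · exact TwoSidedIdeal.mul_mem_right _ _ _ (mem_tsMul (hN b hb) (hM a ha))

end DimensionSubgroup

theorem stmt12_general (G : Type*) [Group G] (n : ℕ) (R : Fin n → Subgroup G)
    (g : G)
    (hg : g ∈ ⨆ (I : Finset (Fin n)) (_ : I ≠ ∅) (_ : I ≠ Finset.univ),
      ⁅⨅ i ∈ I, R i, ⨅ j ∈ Iᶜ, R j⁆) :
    MonoidAlgebra.of ℤ G g - 1 ∈
      ⨆ (I : Finset (Fin n)) (_ : I ≠ ∅) (_ : I ≠ Finset.univ),
        (tsMul (⨅ i ∈ I, relIdeal G (R i)) (⨅ j ∈ Iᶜ, relIdeal G (R j)) ⊔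
          tsMul (⨅ j ∈ Iᶜ, relIdeal G (R j)) (⨅ i ∈ I, relIdeal G (R i))) := by
  refine mem_dimensionSubgroup.mp <| SetLike.le_def.mp
    (iSup_le fun I => iSup₂_le fun hI hIc => ?_) hg
  refine (commutator_le_dimensionSubgroup (fun a ha => of_sub_one_mem_iInf_relIdeal ha)
    (fun b hb => of_sub_one_mem_iInf_relIdeal hb)).trans (dimensionSubgroup_mono ?_)
  exact le_iSup_of_le I <| le_iSup₂_of_le hI hIc le_rfl

/-- Let `R₁,…,Rₙ` (`n ≥ 2`) be normal subgroups of `G`.  With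
`‖R₁,…,Rₙ‖ = ∏ [∩_{i∈I} Rᵢ, ∩_{j∈J} Rⱼ]` over all partitions `{1,…,n} = I ⊔ J` into two
nonempty parts (a product of normal subgroups, i.e. a join), and
`‖𝐫₁,…,𝐫ₙ‖ = Σ ((∩_{i∈I} 𝐫ᵢ)(∩_{j∈J} 𝐫ⱼ) + (∩_{j∈J} 𝐫ⱼ)(∩_{i∈I} 𝐫ᵢ))` over the same
partitions, every `g ∈ ‖R₁,…,Rₙ‖` satisfies `g − 1 ∈ ‖𝐫₁,…,𝐫ₙ‖`. -/
theorem stmt12 (G : Type*) [Group G] (n : ℕ) (hn : 2 ≤ n) (R : Fin n → Subgroup G)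
    (hR : ∀ i, (R i).Normal) (g : G)
    (hg : g ∈ ⨆ (I : Finset (Fin n)) (_ : I ≠ ∅) (_ : I ≠ Finset.univ),
      ⁅⨅ i ∈ I, R i, ⨅ j ∈ Iᶜ, R j⁆) :
    MonoidAlgebra.of ℤ G g - 1 ∈
      ⨆ (I : Finset (Fin n)) (_ : I ≠ ∅) (_ : I ≠ Finset.univ),
        (tsMul (⨅ i ∈ I, relIdeal G (R i)) (⨅ j ∈ Iᶜ, relIdeal G (R j)) ⊔
          tsMul (⨅ j ∈ Iᶜ, relIdeal G (R j)) (⨅ i ∈ I, relIdeal G (R i))) :=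
  stmt12_general G n R g hg
end

section
/- Let R be a non-unital ring and I₁, I₂, I₃ two-sided ideals of R. For β ⊆ {1,2,3} write I(β) = ∩_{i∈β} I_i (with I(∅) = R). Then the triple (R; I₁, I₂, I₃) is good — meaning that for all disjoint subsets α, β ⊆ {1,2,3} and every k ∈ {1,2,3} \ (α ∪ β) one has I(β ∪ {k}) ∩ (Σ_{i∈α} I(β ∪ {i})) = Σ_{i∈α} I(β ∪ {k,i}) — if and only if for all i, j, k ∈ {1,2,3} one has I_i ∩ (I_j + I_k) = I_i ∩ I_j + I_i ∩ I_k. -/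
/-- `I(β) = ∩_{i ∈ β} I i`, the intersection of the family of two-sided ideals indexed by
the finite set `β` (with `I(∅)` the whole ring, i.e. `⊤`). -/
def interIdeal {R : Type*} [NonUnitalRing R] {n : ℕ} (I : Fin n → TwoSidedIdeal R)
    (β : Finset (Fin n)) : TwoSidedIdeal R :=
  ⨅ i ∈ β, I i

/-- An `n`-tuple of two-sided ideals `(R; I₁,…,Iₙ)` of a non-unital ring is *good* if for
all disjoint `α, β ⊆ {1,…,n}` and all `k ∉ α ∪ β`:
`I(β∪{k}) ∩ (Σ_{i∈α} I(β∪{i})) = Σ_{i∈α} I(β∪{k,i})` (sums of ideals are joins). -/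
def GoodTuple {R : Type*} [NonUnitalRing R] {n : ℕ} (I : Fin n → TwoSidedIdeal R) : Prop :=
  ∀ α β : Finset (Fin n), Disjoint α β → ∀ k ∉ α ∪ β,
    interIdeal I (insert k β) ⊓ (⨆ i ∈ α, interIdeal I (insert i β)) =
      ⨆ i ∈ α, interIdeal I (insert k (insert i β))

/-!
Instances of the goodness condition with `|α| ≤ 1` hold for any family of ideals, because
`I(β ∪ {k}) ∩ I(β ∪ {i}) = I(β ∪ {k, i})`. For three ideals, `α ∪ β` avoids `k`, so the only
other instances have `α = {i, j}` and `β = ∅`, and these are exactly the relations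
`I_k ∩ (I_i + I_j) = I_k ∩ I_i + I_k ∩ I_j`; the relations with a repeated index are lattice
identities.
-/

lemma Finset.card_add_card_lt_card_univ_of_notMem_union {ι : Type*} [Fintype ι] [DecidableEq ι]
    {α β : Finset ι} (hαβ : Disjoint α β) {k : ι} (hk : k ∉ α ∪ β) :
    α.card + β.card < Fintype.card ι :=
  Finset.card_union_of_disjoint hαβ ▸ Finset.card_lt_univ_of_notMem hk

section interIdeal

variable {R : Type*} [NonUnitalRing R] {n : ℕ} (I : Fin n → TwoSidedIdeal R)

lemma interIdeal_empty : interIdeal I ∅ = ⊤ := by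
  simp [interIdeal]

lemma interIdeal_insert (k : Fin n) (β : Finset (Fin n)) :
    interIdeal I (insert k β) = I k ⊓ interIdeal I β :=
  Finset.iInf_insert k β I

lemma interIdeal_insert_insert (k i : Fin n) (β : Finset (Fin n)) :
    interIdeal I (insert k (insert i β)) =
      interIdeal I (insert k β) ⊓ interIdeal I (insert i β) := by
  simp only [interIdeal_insert]
  rw [← inf_assoc, inf_inf_distrib_right]

end interIdeal

namespace GoodTuple

variable {R : Type*} [NonUnitalRing R] {n : ℕ} (I : Fin n → TwoSidedIdeal R)

def GoodAt (α β : Finset (Fin n)) (k : Fin n) : Prop :=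
  interIdeal I (insert k β) ⊓ (⨆ i ∈ α, interIdeal I (insert i β)) =
    ⨆ i ∈ α, interIdeal I (insert k (insert i β))

lemma goodAt_of_card_le_one {α : Finset (Fin n)} (hα : α.card ≤ 1) (β : Finset (Fin n))
    (k : Fin n) : GoodAt I α β k := by
  rcases Nat.le_one_iff_eq_zero_or_eq_one.mp hα with hα | hα
  · obtain rfl := Finset.card_eq_zero.mp hα
    simp [GoodAt]
  · obtain ⟨i, rfl⟩ := Finset.card_eq_one.mp hα
    simp [GoodAt, interIdeal_insert_insert]

lemma goodAt_pair_empty_iff (i j k : Fin n) :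
    GoodAt I {i, j} ∅ k ↔ I k ⊓ (I i ⊔ I j) = I k ⊓ I i ⊔ I k ⊓ I j := by
  simp only [GoodAt, Finset.iSup_insert, Finset.iSup_singleton, interIdeal_insert,
    interIdeal_empty, inf_top_eq]

lemma inf_sup_distrib {I : Fin n → TwoSidedIdeal R} (hI : GoodTuple I) (i j k : Fin n) :
    I i ⊓ (I j ⊔ I k) = I i ⊓ I j ⊔ I i ⊓ I k := by
  by_cases hij : i = j
  · subst hij; simp
  by_cases hik : i = k
  · subst hik; simp
  by_cases hjk : j = k
  · subst hjk; simp
  exact (goodAt_pair_empty_iff I j k i).mp (hI {j, k} ∅ (by simp) i (by simp [hij, hik]))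

lemma of_inf_sup_distrib {I : Fin 3 → TwoSidedIdeal R}
    (h : ∀ i j k : Fin 3, I i ⊓ (I j ⊔ I k) = I i ⊓ I j ⊔ I i ⊓ I k) : GoodTuple I := by
  intro α β hαβ k hk
  have hcard : α.card + β.card < 3 := by
    simpa using Finset.card_add_card_lt_card_univ_of_notMem_union hαβ hk
  by_cases hα : α.card ≤ 1
  · exact goodAt_of_card_le_one I hα β k
  obtain ⟨i, j, -, rfl⟩ := Finset.card_eq_two.mp (show α.card = 2 by omega)
  obtain rfl : β = ∅ := Finset.card_eq_zero.mp (by omega)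
  exact (goodAt_pair_empty_iff I i j k).mpr (h k i j)

end GoodTuple

/-- A triple `(R; I₁, I₂, I₃)` of two-sided ideals of a non-unital ring
is good if and only if `Iᵢ ∩ (Iⱼ + Iₖ) = Iᵢ ∩ Iⱼ + Iᵢ ∩ Iₖ` for all `i, j, k ∈ {1,2,3}`. -/
theorem stmt13 {R : Type*} [NonUnitalRing R] (I : Fin 3 → TwoSidedIdeal R) :
    GoodTuple I ↔ ∀ i j k : Fin 3, I i ⊓ (I j ⊔ I k) = I i ⊓ I j ⊔ I i ⊓ I k :=
  ⟨GoodTuple.inf_sup_distrib, GoodTuple.of_inf_sup_distrib⟩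
end

section
/- Let ℛ be an n-cube of non-unital rings, i.e. a functor from the poset of subsets of ⟨n⟩ = {1,…,n} (ordered by inclusion) to non-unital rings. For disjoint α, β ⊆ ⟨n⟩ define E(α,β) = Ker( ℛ(α) → ∏_{i∈β} ℛ(α ∪ {i}) ), the kernel of the map whose components are the structure maps. Then the following are equivalent: (1) for every α ⊆ ⟨n⟩ and every family (r_i)_{i ∉ α} with r_i ∈ ℛ(α ∪ {i}) satisfying that the images of r_i and r_j in ℛ(α ∪ {i,j}) coincide for all i, j ∉ α, there exists r ∈ ℛ(α) whose image in ℛ(α ∪ {i}) is r_i for every i ∉ α; (2) for all disjoint α, β ⊆ ⟨n⟩ and all k ∈ ⟨n⟩ \ (α ∪ β), the sequence 0 → E(α, β ∪ {k}) → E(α, β) → E(α ∪ {k}, β) → 0 is a short exact sequence of non-unital rings (where the maps are the inclusion and the map induced by ℛ(α) → ℛ(α ∪ {k})). -/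
/-- An `n`-cube of non-unital rings: a functor from the poset of subsets of `{1,…,n}`
(ordered by inclusion) to non-unital rings. -/
structure RingCube (n : ℕ) where
  /-- the ring at the vertex `α` -/
  obj : Finset (Fin n) → Type*
  /-- each vertex carries a non-unital ring structure -/
  ring : ∀ α, NonUnitalRing (obj α)
  /-- the structure map for an inclusion `α ⊆ α'` -/
  map : ∀ {α α' : Finset (Fin n)}, α ⊆ α' → (obj α →ₙ+* obj α')
  map_id : ∀ α : Finset (Fin n), map (Finset.Subset.refl α) = NonUnitalRingHom.id (obj α)
  map_comp : ∀ {α α' α'' : Finset (Fin n)} (h : α ⊆ α') (h' : α' ⊆ α''),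
    map (h.trans h') = (map h').comp (map h)

attribute [instance] RingCube.ring

/-- `E(α,β)`: the kernel of `ℛ(α) → ∏_{i∈β} ℛ(α ∪ {i})`, as a subset of `ℛ(α)`. -/
def Ecube {n : ℕ} (ℛ : RingCube n) (α β : Finset (Fin n)) : Set (ℛ.obj α) :=
  {x | ∀ i ∈ β, ℛ.map (Finset.subset_insert i α) x = 0}

/-- An `n`-cube of non-unital rings is *fibrant* if every compatible collection
`(rᵢ)_{i∉α}`, `rᵢ ∈ ℛ(α∪{i})` (images of `rᵢ` and `rⱼ` agreeing in `ℛ(α∪{i,j})`)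
admits a lifting `r ∈ ℛ(α)`. -/
def RingCube.Fibrant {n : ℕ} (ℛ : RingCube n) : Prop :=
  ∀ (α : Finset (Fin n)) (r : (i : Fin n) → i ∉ α → ℛ.obj (insert i α)),
    (∀ (i j : Fin n) (hi : i ∉ α) (hj : j ∉ α),
      ℛ.map (Finset.insert_subset_insert i (Finset.subset_insert j α)) (r i hi) =
        ℛ.map (Finset.subset_insert i (insert j α)) (r j hj)) →
    ∃ x : ℛ.obj α, ∀ (i : Fin n) (hi : i ∉ α), ℛ.map (Finset.subset_insert i α) x = r i hi

/-!
Fibrancy is equivalent to the lifting of compatible families indexed by an arbitrary set `S`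
of indices outside `α`. Given fibrancy, such a family is extended one missing index `m` at a
time: the new value at `α ∪ {m}` is itself a lift, one vertex higher, of the restricted family.
Surjectivity of `E(α,β) → E(α∪{k},β)` is then the lifting of the family that is `y` at `k` and
`0` on `β`. Conversely, given surjectivity, a lift `x` over `T` is corrected to a lift over
`T ∪ {k}` by adding a preimage in `E(α,T)` of the discrepancy `rₖ - x|_{α∪{k}} ∈ E(α∪{k},T)`.
-/

open Finset

namespace RingCube

variable {n : ℕ} (ℛ : RingCube n)

theorem map_map {α α' α'' : Finset (Fin n)} (h : α ⊆ α') (h' : α' ⊆ α'') (x : ℛ.obj α) :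
    ℛ.map h' (ℛ.map h x) = ℛ.map (h.trans h') x := by
  rw [ℛ.map_comp h h']
  rfl

/-- Unlike the single equation in `Fibrant`, this notion is symmetric. -/
def Agree {β₁ β₂ : Finset (Fin n)} (a : ℛ.obj β₁) (b : ℛ.obj β₂) : Prop :=
  ∀ (γ : Finset (Fin n)) (h₁ : β₁ ⊆ γ) (h₂ : β₂ ⊆ γ), ℛ.map h₁ a = ℛ.map h₂ b

variable {ℛ}

theorem agree_refl {β : Finset (Fin n)} (a : ℛ.obj β) : ℛ.Agree a a :=
  fun _ _ _ => rfl

theorem Agree.symm {β₁ β₂ : Finset (Fin n)} {a : ℛ.obj β₁} {b : ℛ.obj β₂} (hab : ℛ.Agree a b) :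
    ℛ.Agree b a :=
  fun γ h₂ h₁ => (hab γ h₁ h₂).symm

theorem Agree.map {β₁ β₂ β₁' β₂' : Finset (Fin n)} {a : ℛ.obj β₁} {b : ℛ.obj β₂}
    (hab : ℛ.Agree a b) (h₁ : β₁ ⊆ β₁') (h₂ : β₂ ⊆ β₂') :
    ℛ.Agree (ℛ.map h₁ a) (ℛ.map h₂ b) := by
  intro γ g₁ g₂
  rw [ℛ.map_map, ℛ.map_map]
  exact hab γ _ _

theorem agree_of_map_eq {β₁ β₂ δ : Finset (Fin n)} {a : ℛ.obj β₁} {b : ℛ.obj β₂}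
    (h₁ : β₁ ⊆ δ) (h₂ : β₂ ⊆ δ) (hδ : δ ⊆ β₁ ∪ β₂) (h : ℛ.map h₁ a = ℛ.map h₂ b) :
    ℛ.Agree a b := by
  intro γ g₁ g₂
  have hδγ : δ ⊆ γ := hδ.trans (union_subset g₁ g₂)
  rw [← ℛ.map_map h₁ hδγ, ← ℛ.map_map h₂ hδγ, h]

theorem agree_of_map_insert_eq {α : Finset (Fin n)} {i j : Fin n} {a : ℛ.obj (insert i α)}
    {b : ℛ.obj (insert j α)}
    (h : ℛ.map (insert_subset_insert i (subset_insert j α)) a =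
      ℛ.map (subset_insert i (insert j α)) b) :
    ℛ.Agree a b :=
  agree_of_map_eq _ _ (by intro x; simp only [mem_insert, mem_union]; tauto) h

variable (ℛ)

/-- Families are indexed by all of `Fin n`; only their values on `S` matter. -/
def IsCompatibleOn (α S : Finset (Fin n)) (r : ∀ i, ℛ.obj (insert i α)) : Prop :=
  ∀ i ∈ S, ∀ j ∈ S, ℛ.Agree (r i) (r j)

def IsLiftOn (α S : Finset (Fin n)) (r : ∀ i, ℛ.obj (insert i α)) (x : ℛ.obj α) : Prop :=
  ∀ i ∈ S, ℛ.map (subset_insert i α) x = r i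

variable {ℛ}

theorem isCompatibleOn_zero (α S : Finset (Fin n)) : ℛ.IsCompatibleOn α S 0 := by
  intro i _ j _ γ _ _
  simp only [Pi.zero_apply, map_zero]

theorem IsCompatibleOn.mono {α S T : Finset (Fin n)} {r : ∀ i, ℛ.obj (insert i α)}
    (hr : ℛ.IsCompatibleOn α T r) (hST : S ⊆ T) : ℛ.IsCompatibleOn α S r :=
  fun i hi j hj => hr i (hST hi) j (hST hj)

theorem IsCompatibleOn.update {α S : Finset (Fin n)} {r : ∀ i, ℛ.obj (insert i α)}
    (hr : ℛ.IsCompatibleOn α S r) {m : Fin n} {x : ℛ.obj (insert m α)}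
    (hx : ∀ j ∈ S, ℛ.Agree x (r j)) :
    ℛ.IsCompatibleOn α (insert m S) (Function.update r m x) := by
  intro i hi j hj
  rcases eq_or_ne i m with rfl | him
  · rcases eq_or_ne j i with rfl | hji
    · exact agree_refl _
    · rw [Function.update_self, Function.update_of_ne hji]
      exact hx j ((mem_insert.mp hj).resolve_left hji)
  · have hiS := (mem_insert.mp hi).resolve_left him
    rw [Function.update_of_ne him]
    rcases eq_or_ne j m with rfl | hjm
    · rw [Function.update_self]
      exact (hx i hiS).symm
    · rw [Function.update_of_ne hjm]
      exact hr i hiS j ((mem_insert.mp hj).resolve_left hjm)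

theorem Fibrant.exists_isLiftOn (hℛ : ℛ.Fibrant) {α S : Finset (Fin n)} (hαS : Disjoint α S)
    {r : ∀ i, ℛ.obj (insert i α)} (hr : ℛ.IsCompatibleOn α S r) :
    ∃ x, ℛ.IsLiftOn α S r x := by
  obtain ⟨U, hU⟩ : ∃ U, (α ∪ S)ᶜ = U := ⟨_, rfl⟩
  induction U using Finset.induction_on generalizing α S with
  | empty =>
    have hS : ∀ i ∉ α, i ∈ S := fun i hi =>
      (mem_union.mp ((compl_eq_empty_iff _).mp hU ▸ mem_univ i)).resolve_left hi
    obtain ⟨x, hx⟩ := hℛ α (fun i _ => r i) fun i j hi hj => hr i (hS i hi) j (hS j hj) _ _ _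
    exact ⟨x, fun i hi => hx i (disjoint_right.mp hαS hi)⟩
  | insert m U hmU ih =>
    have hmem : ∀ i, i ∉ α ∧ i ∉ S ↔ i = m ∨ i ∈ U := fun i => by
      rw [← not_or, ← mem_union, ← mem_compl, hU, mem_insert]
    obtain ⟨hmα, hmS⟩ := (hmem m).mpr (Or.inl rfl)
    obtain ⟨x₀, hx₀⟩ := ih (disjoint_insert_left.mpr ⟨hmS, hαS⟩)
      (r := fun i => ℛ.map (insert_subset_insert i (subset_insert m α)) (r i))
      (fun i hi j hj => (hr i hi j hj).map _ _)
      (by ext i; have := hmem i; simp only [mem_compl, mem_union, mem_insert] at this ⊢; grind)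
    have hx₀r : ∀ j ∈ S, ℛ.Agree x₀ (r j) := fun j hj =>
      (agree_of_map_insert_eq (hx₀ j hj).symm).symm
    obtain ⟨x, hx⟩ := ih (disjoint_insert_right.mpr ⟨hmα, hαS⟩) (hr.update hx₀r)
      (by ext i; have := hmem i; simp only [mem_compl, mem_union, mem_insert] at this ⊢; grind)
    refine ⟨x, fun i hi => ?_⟩
    rw [hx i (mem_insert_of_mem hi), Function.update_of_ne (ne_of_mem_of_not_mem hi hmS)]

theorem fibrant_iff_forall_exists_isLiftOn :
    ℛ.Fibrant ↔ ∀ α S : Finset (Fin n), Disjoint α S →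
      ∀ r : ∀ i, ℛ.obj (insert i α), ℛ.IsCompatibleOn α S r → ∃ x, ℛ.IsLiftOn α S r x := by
  refine ⟨fun hℛ α S hαS r hr => hℛ.exists_isLiftOn hαS hr, fun H α r hr => ?_⟩
  let r' : ∀ i, ℛ.obj (insert i α) := fun i => if hi : i ∈ α then 0 else r i hi
  have hr' : ℛ.IsCompatibleOn α αᶜ r' := by
    intro i hi j hj
    rw [mem_compl] at hi hj
    simpa only [r', dif_neg hi, dif_neg hj] using agree_of_map_insert_eq (hr i j hi hj)
  obtain ⟨x, hx⟩ := H α αᶜ disjoint_compl_right r' hr'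
  exact ⟨x, fun i hi => (hx i (mem_compl.mpr hi)).trans (dif_neg hi)⟩

theorem mem_Ecube_insert {α β : Finset (Fin n)} {k : Fin n} {x : ℛ.obj α} :
    x ∈ Ecube ℛ α (insert k β) ↔ ℛ.map (subset_insert k α) x = 0 ∧ x ∈ Ecube ℛ α β :=
  forall_mem_insert _ _ _

theorem map_mem_Ecube {α β : Finset (Fin n)} {x : ℛ.obj α} (hx : x ∈ Ecube ℛ α β) (k : Fin n) :
    ℛ.map (subset_insert k α) x ∈ Ecube ℛ (insert k α) β := by
  intro i hi
  rw [ℛ.map_map, ← ℛ.map_map (subset_insert i α) (insert_subset_insert i (subset_insert k α)),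
    hx i hi, map_zero]

theorem Fibrant.exists_mem_Ecube_map_eq (hℛ : ℛ.Fibrant) {α β : Finset (Fin n)}
    (hαβ : Disjoint α β) {k : Fin n} (hk : k ∉ α ∪ β) {y : ℛ.obj (insert k α)}
    (hy : y ∈ Ecube ℛ (insert k α) β) :
    ∃ x ∈ Ecube ℛ α β, ℛ.map (subset_insert k α) x = y := by
  rw [mem_union, not_or] at hk
  have hyr : ∀ j ∈ β, ℛ.Agree y ((0 : ∀ i, ℛ.obj (insert i α)) j) := fun j hj =>
    (agree_of_map_insert_eq (by rw [hy j hj, Pi.zero_apply, map_zero])).symm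
  obtain ⟨x, hx⟩ := hℛ.exists_isLiftOn (disjoint_insert_right.mpr ⟨hk.1, hαβ⟩)
    ((isCompatibleOn_zero α β).update hyr)
  refine ⟨x, fun i hi => ?_, ?_⟩
  · rw [hx i (mem_insert_of_mem hi), Function.update_of_ne (ne_of_mem_of_not_mem hi hk.2),
      Pi.zero_apply]
  · rw [hx k (mem_insert_self k β), Function.update_self]

theorem exists_isLiftOn_of_surjective {α : Finset (Fin n)}
    (hsurj : ∀ β, Disjoint α β → ∀ k ∉ α ∪ β, ∀ y ∈ Ecube ℛ (insert k α) β,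
      ∃ x ∈ Ecube ℛ α β, ℛ.map (subset_insert k α) x = y)
    {S : Finset (Fin n)} (hαS : Disjoint α S) {r : ∀ i, ℛ.obj (insert i α)}
    (hr : ℛ.IsCompatibleOn α S r) :
    ∃ x, ℛ.IsLiftOn α S r x := by
  induction S using Finset.induction_on with
  | empty => exact ⟨0, fun i hi => absurd hi (notMem_empty i)⟩
  | insert k T hkT ih =>
    have hαT := hαS.mono_right (subset_insert k T)
    obtain ⟨x, hx⟩ := ih hαT (hr.mono (subset_insert k T))
    have hkα : k ∉ α := disjoint_right.mp hαS (mem_insert_self k T)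
    have hd : r k - ℛ.map (subset_insert k α) x ∈ Ecube ℛ (insert k α) T := by
      intro i hi
      rw [map_sub, sub_eq_zero,
        hr k (mem_insert_self k T) i (mem_insert_of_mem hi) _ _
          (insert_subset_insert i (subset_insert k α)), ← hx i hi, ℛ.map_map, ℛ.map_map]
    obtain ⟨e, he, hek⟩ := hsurj T hαT k (by simp [hkα, hkT]) _ hd
    refine ⟨x + e, fun i hi => ?_⟩
    rcases mem_insert.mp hi with rfl | hiT
    · rw [map_add, hek, add_sub_cancel]
    · rw [map_add, hx i hiT, he i hiT, add_zero]

end RingCube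

/-- For an `n`-cube `ℛ` of non-unital rings, the following are
equivalent: (1) `ℛ` is fibrant (every compatible collection over the complement of a
vertex lifts); (2) for all disjoint `α, β` and `k ∉ α ∪ β`, the sequence
`0 → E(α, β∪{k}) → E(α, β) → E(α∪{k}, β) → 0` is short exact: the map
`ℛ(α) → ℛ(α∪{k})` carries `E(α,β)` into `E(α∪{k},β)`, its kernel within
`E(α,β)` is exactly `E(α, β∪{k})` (the first map being the inclusion, automatically
injective), and `E(α,β) → E(α∪{k},β)` is surjective. -/
theorem stmt14 {n : ℕ} (ℛ : RingCube n) :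
    ℛ.Fibrant ↔
      ∀ α β : Finset (Fin n), Disjoint α β → ∀ k ∉ α ∪ β,
        (∀ x ∈ Ecube ℛ α β,
          ℛ.map (Finset.subset_insert k α) x ∈ Ecube ℛ (insert k α) β) ∧
        (∀ x ∈ Ecube ℛ α β,
          (x ∈ Ecube ℛ α (insert k β) ↔ ℛ.map (Finset.subset_insert k α) x = 0)) ∧
        (∀ y ∈ Ecube ℛ (insert k α) β,
          ∃ x ∈ Ecube ℛ α β, ℛ.map (Finset.subset_insert k α) x = y) := by
  constructor
  · intro hℛ α β hαβ k hk
    exact ⟨fun x hx => RingCube.map_mem_Ecube hx k,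
      fun x hx => by rw [RingCube.mem_Ecube_insert, and_iff_left hx],
      fun y hy => hℛ.exists_mem_Ecube_map_eq hαβ hk hy⟩
  · intro H
    exact RingCube.fibrant_iff_forall_exists_isLiftOn.mpr fun α S hαS r hr =>
      RingCube.exists_isLiftOn_of_surjective (fun β hαβ k hk => (H α β hαβ k hk).2.2) hαS hr
end
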